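/- Let A be a finite multiset (sequence) over an abelian group G whose support S(A) satisfies |A| > |S(A)| and |S(A)| = 2, and let 2 ≤ k ≤ |A| − 2. Then |k∧A| = 2 if and only if S(A) is a coset of a subgroup of order 2, or exactly one of the two elements of S(A) appears at least twice in A. -/
import Mathlib


open Finset Pointwise

/-- The set of sums of `k` distinct elements of the multiset `A`
(sums over sub-multisets of cardinality `k`). -/
def nSumM {G : Type*} [AddCommGroup G] [DecidableEq G] (k : ℕ) (A : Multiset G) : Finset G :=
  ((A.powersetCard k).map Multiset.sum).toFinset

lemma Icc_pair (u : ℕ) : Finset.Icc u (u + 1) = {u, u + 1} := by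
  ext x; simp [Finset.mem_Icc]; omega

lemma keylem {G : Type*} [AddCommGroup G] {a b : G} {k i j : ℕ} (hij : i ≤ j) (hjk : j ≤ k) :
    (j • a + (k - j) • b = i • a + (k - i) • b) ↔ (j - i) • a = (j - i) • b := by
  obtain ⟨t, rfl⟩ := Nat.exists_eq_add_of_le hij
  obtain ⟨u, rfl⟩ := Nat.exists_eq_add_of_le hjk
  simp only [Nat.add_sub_cancel_left, add_nsmul,
    show i + t + u - (i + t) = u by omega, show i + t + u - i = t + u by omega]
  constructor
  · intro h
    rw [add_assoc] at h
    exact add_right_cancel (add_left_cancel h)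
  · intro h
    rw [add_assoc, h]

theorem stmt19 {G : Type*} [AddCommGroup G] [DecidableEq G] (A : Multiset G) (k : ℕ)
    (hsupp : A.toFinset.card < Multiset.card A)
    (hS : A.toFinset.card = 2)
    (hk2 : 2 ≤ k) (hk : k ≤ Multiset.card A - 2) :
    (nSumM k A).card = 2 ↔
      (∃ (H : AddSubgroup G) (g : G), Nat.card H = 2 ∧
        (A.toFinset : Set G) = g +ᵥ (H : Set G)) ∨
      (A.toFinset.filter fun x => 2 ≤ A.count x).card = 1 := by
  obtain ⟨a, b, hab, hAB⟩ := Finset.card_eq_two.mp hS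
  obtain ⟨m, hm_def⟩ : ∃ m, m = A.count a := ⟨_, rfl⟩
  obtain ⟨n, hn_def⟩ : ∃ n, n = A.count b := ⟨_, rfl⟩
  have ha : a ∈ A := by rw [← Multiset.mem_toFinset, hAB]; simp
  have hb : b ∈ A := by rw [← Multiset.mem_toFinset, hAB]; simp
  have hm1 : 1 ≤ m := hm_def ▸ Multiset.one_le_count_iff_mem.mpr ha
  have hn1 : 1 ≤ n := hn_def ▸ Multiset.one_le_count_iff_mem.mpr hb
  have hA : A = Multiset.replicate m a + Multiset.replicate n b := by
    ext c
    rw [Multiset.count_add, Multiset.count_replicate, Multiset.count_replicate]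
    by_cases hca : c = a
    · subst hca
      rw [if_pos rfl, if_neg (Ne.symm hab)]
      omega
    · by_cases hcb : c = b
      · subst hcb
        rw [if_neg hab, if_pos rfl]
        omega
      · have hac : a ≠ c := fun h => hca h.symm
        have hbc : b ≠ c := fun h => hcb h.symm
        have hcA : c ∉ A := by
          rw [← Multiset.mem_toFinset, hAB]
          simp only [Finset.mem_insert, Finset.mem_singleton]
          push_neg
          exact ⟨hca, hcb⟩
        rw [if_neg hac, if_neg hbc, Multiset.count_eq_zero.mpr hcA]
  have hcard : Multiset.card A = m + n := by rw [hA]; simp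
  rw [hcard] at hsupp hk
  rw [hS] at hsupp
  -- the sum function
  set f : ℕ → G := fun i => i • a + (k - i) • b with hf_def
  have hkey : ∀ i j : ℕ, i ≤ j → j ≤ k → (f j = f i ↔ (j - i) • a = (j - i) • b) :=
    fun i j hij hjk => keylem hij hjk
  -- description of nSumM as an image
  have himg : nSumM k A = Finset.image f (Finset.Icc (k - n) (min k m)) := by
    ext x
    simp only [nSumM, Multiset.mem_toFinset, Multiset.mem_map, Multiset.mem_powersetCard,
      Finset.mem_image, Finset.mem_Icc]
    constructor
    · rintro ⟨B, ⟨hBA, hBk⟩, hBsum⟩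
      obtain ⟨i, hi_def⟩ : ∃ i, i = B.count a := ⟨_, rfl⟩
      obtain ⟨j, hj_def⟩ : ∃ j, j = B.count b := ⟨_, rfl⟩
      have him : i ≤ m := by
        rw [hi_def, hm_def]; exact Multiset.count_le_of_le a hBA
      have hjn : j ≤ n := by
        rw [hj_def, hn_def]; exact Multiset.count_le_of_le b hBA
      have hB : B = Multiset.replicate i a + Multiset.replicate j b := by
        ext c
        rw [Multiset.count_add, Multiset.count_replicate, Multiset.count_replicate]
        by_cases hca : c = a
        · subst hca
          rw [if_pos rfl, if_neg (Ne.symm hab)]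
          omega
        · by_cases hcb : c = b
          · subst hcb
            rw [if_neg hab, if_pos rfl]
            omega
          · have hac : a ≠ c := fun h => hca h.symm
            have hbc : b ≠ c := fun h => hcb h.symm
            have hcA : c ∉ A := by
              rw [← Multiset.mem_toFinset, hAB]
              simp only [Finset.mem_insert, Finset.mem_singleton]
              push_neg
              exact ⟨hca, hcb⟩
            have hcB : c ∉ B := fun hc => hcA (Multiset.mem_of_le hBA hc)
            rw [if_neg hac, if_neg hbc, Multiset.count_eq_zero.mpr hcB]
      have hij : i + j = k := by
        rw [hB] at hBk; simpa using hBk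
      refine ⟨i, ⟨by omega, le_min (by omega) him⟩, ?_⟩
      rw [← hBsum, hB]
      simp only [Multiset.sum_add, Multiset.sum_replicate, hf_def]
      rw [show k - i = j by omega]
    · rintro ⟨i, ⟨hlo, hhi⟩, hx⟩
      have hik : i ≤ k := le_trans hhi (min_le_left _ _)
      have him : i ≤ m := le_trans hhi (min_le_right _ _)
      refine ⟨Multiset.replicate i a + Multiset.replicate (k - i) b, ⟨?_, ?_⟩, ?_⟩
      · rw [hA]
        exact add_le_add ((Multiset.replicate_le_replicate a).mpr him)
          ((Multiset.replicate_le_replicate b).mpr (by omega))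
      · simp only [Multiset.card_add, Multiset.card_replicate]
        omega
      · rw [← hx]
        simp only [Multiset.sum_add, Multiset.sum_replicate, hf_def]
  -- replace the interval bounds by opaque variables
  obtain ⟨lo, hlo⟩ : ∃ lo, lo = k - n := ⟨_, rfl⟩
  obtain ⟨hi, hhi⟩ : ∃ hi, hi = min k m := ⟨_, rfl⟩
  rw [← hlo, ← hhi] at himg
  have hhik : hi ≤ k := hhi ▸ min_le_left k m
  have hhim : hi ≤ m := hhi ▸ min_le_right k m
  have hhicase : hi = k ∨ hi = m := by
    rcases le_total k m with h | h
    · exact Or.inl (hhi ▸ min_eq_left h)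
    · exact Or.inr (hhi ▸ min_eq_right h)
  clear hhi
  have hbound1 : lo + 1 ≤ hi := by omega
  -- translating the coset condition
  have hco : (∃ (H : AddSubgroup G) (g : G), Nat.card H = 2 ∧
      (A.toFinset : Set G) = g +ᵥ (H : Set G)) ↔ a + a = b + b := by
    constructor
    · rintro ⟨H, g, hH2, hset⟩
      have haH : (a : G) ∈ g +ᵥ (H : Set G) := by rw [← hset, hAB]; simp
      have hbH : (b : G) ∈ g +ᵥ (H : Set G) := by rw [← hset, hAB]; simp
      obtain ⟨h1, hh1, hgh1⟩ := haH
      obtain ⟨h2, hh2, hgh2⟩ := hbH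
      have e1 : h1 + h1 = 0 := by
        have h := card_nsmul_eq_zero' (x := (⟨h1, hh1⟩ : H))
        rw [hH2, two_nsmul] at h
        simpa using congrArg Subtype.val h
      have e2 : h2 + h2 = 0 := by
        have h := card_nsmul_eq_zero' (x := (⟨h2, hh2⟩ : H))
        rw [hH2, two_nsmul] at h
        simpa using congrArg Subtype.val h
      rw [← hgh1, ← hgh2]
      simp only [vadd_eq_add]
      calc g + h1 + (g + h1) = g + g + (h1 + h1) := by abel
        _ = g + g + (h2 + h2) := by rw [e1, e2]
        _ = g + h2 + (g + h2) := by abel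
    · intro h2ab
      have hd0 : a - b ≠ 0 := sub_ne_zero.mpr hab
      have hd2 : (2 : ℕ) • (a - b) = 0 := by
        rw [two_nsmul, show a - b + (a - b) = (a + a) - (b + b) by abel, h2ab, sub_self]
      have hd2' : (2 : ℤ) • (a - b) = 0 := by
        rw [show (2 : ℤ) = ((2 : ℕ) : ℤ) by norm_num, natCast_zsmul]
        exact hd2
      haveI : Fact (Nat.Prime 2) := ⟨Nat.prime_two⟩
      refine ⟨AddSubgroup.zmultiples (a - b), b, ?_, ?_⟩
      · rw [Nat.card_zmultiples]
        exact addOrderOf_eq_prime hd2 hd0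
      · have hmem : ∀ x ∈ AddSubgroup.zmultiples (a - b), x = 0 ∨ x = a - b := by
          intro x hx
          obtain ⟨z, hz⟩ := AddSubgroup.mem_zmultiples_iff.mp hx
          rcases Int.even_or_odd z with ⟨r, hr⟩ | ⟨r, hr⟩
          · left
            rw [← hz, hr, ← two_mul, mul_zsmul', hd2', smul_zero]
          · right
            rw [← hz, hr, add_zsmul, mul_zsmul', hd2', smul_zero, zero_add, one_zsmul]
        rw [hAB]
        ext x
        simp only [Finset.coe_insert, Finset.coe_singleton, Set.mem_insert_iff,
          Set.mem_singleton_iff, Set.mem_vadd_set, vadd_eq_add]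
        constructor
        · rintro (h | h)
          · exact ⟨a - b, AddSubgroup.mem_zmultiples _, by rw [h]; abel⟩
          · exact ⟨0, zero_mem _, by rw [h]; simp⟩
        · rintro ⟨y, hy, rfl⟩
          rcases hmem y hy with rfl | rfl
          · right; simp
          · left; abel
  -- translating the multiplicity condition
  have hfil : (A.toFinset.filter fun x => 2 ≤ A.count x).card = 1 ↔ (m = 1 ∨ n = 1) := by
    rw [hAB, Finset.filter_insert, Finset.filter_singleton, ← hm_def, ← hn_def]
    by_cases h2m : 2 ≤ m <;> by_cases h2n : 2 ≤ n <;>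
      simp [h2m, h2n, hab] <;> omega
  rw [himg, hco, hfil]
  clear hco hfil himg
  have hne1 : f (lo + 1) ≠ f lo := by
    intro h
    have := (hkey lo (lo + 1) (by omega) (by omega)).mp h
    simp only [Nat.add_sub_cancel_left, one_nsmul] at this
    exact hab this
  constructor
  · -- card = 2 → RHS
    intro hcard2
    by_contra hcon
    push_neg at hcon
    obtain ⟨h2ab, hmn⟩ := hcon
    have hm2 : 2 ≤ m := by omega
    have hn2 : 2 ≤ n := by omega
    have hbound2 : lo + 2 ≤ hi := by omega
    have hne2 : f (lo + 2) ≠ f (lo + 1) := by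
      intro h
      have := (hkey (lo + 1) (lo + 2) (by omega) (by omega)).mp h
      simp only [show lo + 2 - (lo + 1) = 1 by omega, one_nsmul] at this
      exact hab this
    have hne3 : f (lo + 2) ≠ f lo := by
      intro h
      have := (hkey lo (lo + 2) (by omega) (by omega)).mp h
      simp only [Nat.add_sub_cancel_left, two_nsmul] at this
      exact h2ab this
    have hsub : ({f lo, f (lo + 1), f (lo + 2)} : Finset G) ⊆
        Finset.image f (Finset.Icc lo hi) := by
      intro x hx
      simp only [Finset.mem_insert, Finset.mem_singleton] at hx
      rcases hx with rfl | rfl | rfl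
      · exact Finset.mem_image.mpr ⟨lo, Finset.mem_Icc.mpr ⟨le_refl _, by omega⟩, rfl⟩
      · exact Finset.mem_image.mpr ⟨lo + 1, Finset.mem_Icc.mpr ⟨by omega, by omega⟩, rfl⟩
      · exact Finset.mem_image.mpr ⟨lo + 2, Finset.mem_Icc.mpr ⟨by omega, by omega⟩, rfl⟩
    have h3 : 3 ≤ (Finset.image f (Finset.Icc lo hi)).card := by
      refine le_trans ?_ (Finset.card_le_card hsub)
      rw [Finset.card_insert_of_notMem (by simp [Ne.symm hne1, Ne.symm hne3]),
        Finset.card_insert_of_notMem (by simp [Ne.symm hne2]), Finset.card_singleton]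
    omega
  · -- RHS → card = 2
    intro hrhs
    rcases hrhs with h2ab | hmn
    · -- coset case: image is {f lo, f (lo+1)}
      have hd2 : ∀ i, i + 2 ≤ k → f (i + 2) = f i := by
        intro i hi2
        rw [hkey i (i + 2) (by omega) hi2]
        simp only [Nat.add_sub_cancel_left, two_nsmul]
        exact h2ab
      have haux : ∀ t, lo + t ≤ hi → f (lo + t) = f lo ∨ f (lo + t) = f (lo + 1) := by
        intro t
        induction t using Nat.strong_induction_on with
        | _ t ih =>
          match t with
          | 0 => intro _; left; rfl
          | 1 => intro _; right; rfl
          | (t + 2) =>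
            intro hth
            have hlt : lo + t + 2 ≤ k := by omega
            have heq : f (lo + (t + 2)) = f (lo + t) := by
              rw [show lo + (t + 2) = (lo + t) + 2 by ring]
              exact hd2 (lo + t) hlt
            rw [heq]
            exact ih t (by omega) (by omega)
      have hsub : Finset.image f (Finset.Icc lo hi) ⊆ {f lo, f (lo + 1)} := by
        intro x hx
        obtain ⟨i, hi', rfl⟩ := Finset.mem_image.mp hx
        rw [Finset.mem_Icc] at hi'
        have := haux (i - lo) (by omega)
        rw [show lo + (i - lo) = i by omega] at this
        simpa using this
      have hsup : ({f lo, f (lo + 1)} : Finset G) ⊆ Finset.image f (Finset.Icc lo hi) := by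
        intro x hx
        simp only [Finset.mem_insert, Finset.mem_singleton] at hx
        rcases hx with rfl | rfl
        · exact Finset.mem_image.mpr ⟨lo, Finset.mem_Icc.mpr ⟨le_refl _, by omega⟩, rfl⟩
        · exact Finset.mem_image.mpr ⟨lo + 1, Finset.mem_Icc.mpr ⟨by omega, by omega⟩, rfl⟩
      rw [Finset.Subset.antisymm hsub hsup,
        Finset.card_insert_of_notMem (by simp [Ne.symm hne1]), Finset.card_singleton]
    · -- multiplicity case: interval has exactly two elements
      have hint : lo + 1 = hi := by omega
      rw [show Finset.Icc lo hi = {lo, lo + 1} by rw [← hint]; exact Icc_pair lo,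
        Finset.image_insert, Finset.image_singleton,
        Finset.card_insert_of_notMem (by simp [Ne.symm hne1]), Finset.card_singleton]
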